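/- arXiv:1505.00150 — 2 statements merged into one kernel-verified Lean document; each statement's English description precedes it below -/
import Mathlib

section
/- Let T>0, E a Banach space, and let {R^{(λ)}}_{λ∈[0,1]} be a continuous family of evolution systems on E. Define Σ : E × L¹([0,T],E) × [0,1] → C([0,T],E) by Σ(x,w,λ)(t) := R^{(λ)}(t,0)x + ∫_0^t R^{(λ)}(t,s) w(s) ds. Then Σ is continuous. -/
/-!
By Banach–Steinhaus the operators `R^{(λ)}(t,s)` are bounded by a single constant `M` for
`λ ∈ [0,1]` and `0 ≤ s ≤ t ≤ T`: for fixed `y`, `λ ↦ R^{(λ)}(·,·) y` is a continuous map from the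
compact interval `[0,1]` into `C({0 ≤ s ≤ t ≤ T}, E)`. With `Sₙ = R^{(λₙ)} - R^{(λ₀)}`,
`Σₙ(t) - Σ₀(t) = R^{(λₙ)}(t,0)(xₙ - x₀) + Sₙ(t,0)x₀ + ∫₀ᵗ R^{(λₙ)}(t,s)(wₙ - w₀)(s) ds
  + ∫₀ᵗ Sₙ(t,s)w₀(s) ds`,
so, with `φₙ(y) = sup_{s ≤ t} ‖Sₙ(t,s)y‖`, the error is at most
`M‖xₙ - x₀‖ + φₙ(x₀) + M‖wₙ - w₀‖₁ + ∫₀ᵀ φₙ(w₀(s)) ds` uniformly in `t`. The continuity of the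
family gives `φₙ → 0` pointwise, and `φₙ` is `2M`-Lipschitz with `φₙ(y) ≤ 2M‖y‖`, so the last
term tends to `0` by dominated convergence.
-/

open Filter Topology Set MeasureTheory

noncomputable section

variable {E : Type*} [NormedAddCommGroup E] [NormedSpace ℝ E]

/-- An evolution system `{R(t,s)}_{0 ≤ s ≤ t ≤ T}` on `E`. -/
structure IsEvolutionSystem (T : ℝ) (R : ℝ → ℝ → E →L[ℝ] E) : Prop where
  refl : ∀ t ∈ Icc (0 : ℝ) T, R t t = 1
  comp : ∀ ⦃s r t : ℝ⦄, 0 ≤ s → s ≤ r → r ≤ t → t ≤ T → R t s = (R t r).comp (R r s)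
  strong_cont : ∀ x : E, ContinuousOn (fun p : ℝ × ℝ => R p.1 p.2 x)
    {p : ℝ × ℝ | 0 ≤ p.2 ∧ p.2 ≤ p.1 ∧ p.1 ≤ T}

/-- The parameter domain `{(t,s) : 0 ≤ s ≤ t ≤ T}` of an evolution system. -/
def evolDomain (T : ℝ) : Set (ℝ × ℝ) := {p : ℝ × ℝ | 0 ≤ p.2 ∧ p.2 ≤ p.1 ∧ p.1 ≤ T}

/-- A family `{R^{(λ)}}_{λ∈[0,1]}` of evolution systems is continuous: for every `x ∈ E`
and every sequence `λₙ → λ₀` in `[0,1]`, `R^{(λₙ)}(t,s)x → R^{(λ₀)}(t,s)x` uniformly in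
`0 ≤ s ≤ t ≤ T`. -/
def IsContinuousEvolFamily (T : ℝ) (R : ℝ → ℝ → ℝ → E →L[ℝ] E) : Prop :=
  ∀ (x : E) (l : ℕ → ℝ) (l0 : ℝ), (∀ n, l n ∈ Icc (0 : ℝ) 1) → l0 ∈ Icc (0 : ℝ) 1 →
    Tendsto l atTop (𝓝 l0) →
    TendstoUniformlyOn (fun n p => R (l n) p.1 p.2 x) (fun p => R l0 p.1 p.2 x)
      atTop (evolDomain T)

/-- The map `Σ(x,w,λ)(t) = R^{(λ)}(t,0)x + ∫₀ᵗ R^{(λ)}(t,s) w(s) ds`. -/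
def evolMap (R : ℝ → ℝ → E →L[ℝ] E) (x : E) (w : ℝ → E) (t : ℝ) : E :=
  R t 0 x + ∫ s in (0 : ℝ)..t, R t s (w s)

/-- The Hausdorff measure of noncompactness of a set `Q`. -/
def hausdorffMNC (Q : Set E) : ℝ :=
  sInf {r : ℝ | 0 < r ∧ ∃ c : Finset E, Q ⊆ ⋃ y ∈ c, Metric.ball y r}

lemma tendstoUniformlyOn_of_dist_le {ι α β : Type*} [PseudoMetricSpace β] {l : Filter ι}
    {F : ι → α → β} {f : α → β} {s : Set α} {a : ι → ℝ}
    (hF : ∀ n, ∀ t ∈ s, dist (f t) (F n t) ≤ a n) (ha : Tendsto a l (𝓝 0)) :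
    TendstoUniformlyOn F f l s :=
  Metric.tendstoUniformlyOn_iff.mpr fun _ hε =>
    (ha.eventually (gt_mem_nhds hε)).mono fun n hn t ht => (hF n t ht).trans_lt hn

section SupNormApply

variable {ι F : Type*} [NormedAddCommGroup F] [NormedSpace ℝ F]

def supNormApply (S : ι → E →L[ℝ] F) (y : E) : ℝ := ⨆ i, ‖S i y‖

variable {S : ι → E →L[ℝ] F} {C : ℝ}

lemma supNormApply_nonneg (S : ι → E →L[ℝ] F) (y : E) : 0 ≤ supNormApply S y :=
  Real.iSup_nonneg fun _ => norm_nonneg _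

lemma norm_apply_le_supNormApply (hS : ∀ i, ‖S i‖ ≤ C) (i : ι) (y : E) :
    ‖S i y‖ ≤ supNormApply S y :=
  le_ciSup ⟨C * ‖y‖, by rintro _ ⟨j, rfl⟩; exact (S j).le_of_opNorm_le (hS j) y⟩ i

lemma supNormApply_le (hC : 0 ≤ C) (hS : ∀ i, ‖S i‖ ≤ C) (y : E) :
    supNormApply S y ≤ C * ‖y‖ :=
  Real.iSup_le (fun i => (S i).le_of_opNorm_le (hS i) y) (by positivity)

lemma continuous_supNormApply (hC : 0 ≤ C) (hS : ∀ i, ‖S i‖ ≤ C) :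
    Continuous (supNormApply S) := by
  refine (LipschitzWith.of_le_add_mul' C fun y y' => Real.iSup_le (fun i => ?_) ?_).continuous
  · calc ‖S i y‖ ≤ ‖S i y'‖ + ‖S i (y - y')‖ := by
          rw [map_sub]; exact norm_le_insert' _ _
      _ ≤ supNormApply S y' + C * dist y y' := by
          rw [dist_eq_norm]
          exact add_le_add (norm_apply_le_supNormApply hS i y') ((S i).le_of_opNorm_le (hS i) _)
  · exact add_nonneg (supNormApply_nonneg S y') (by positivity)

lemma tendsto_supNormApply_zero {S : ℕ → ι → E →L[ℝ] F} {y : E}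
    (h : TendstoUniformly (fun n i => S n i y) 0 atTop) :
    Tendsto (fun n => supNormApply (S n) y) atTop (𝓝 0) := by
  refine Metric.tendsto_atTop.mpr fun ε hε => ?_
  obtain ⟨N, hN⟩ := eventually_atTop.mp (Metric.tendstoUniformly_iff.mp h (ε / 2) (by positivity))
  refine ⟨N, fun n hn => ?_⟩
  have hsup : supNormApply (S n) y ≤ ε / 2 :=
    Real.iSup_le (fun i => by simpa using (hN n hn i).le) (by positivity)
  rw [Real.dist_eq, sub_zero, abs_of_nonneg (supNormApply_nonneg _ _)]
  linarith

variable {α : Type*} [MeasurableSpace α] {μ : Measure α} {u : α → E}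

lemma integrable_supNormApply_comp (hC : 0 ≤ C) (hS : ∀ i, ‖S i‖ ≤ C) (hu : Integrable u μ) :
    Integrable (fun a => supNormApply S (u a)) μ :=
  (hu.norm.const_mul C).mono' ((continuous_supNormApply hC hS).comp_aestronglyMeasurable hu.1)
    (ae_of_all _ fun a => by
      rw [Real.norm_of_nonneg (supNormApply_nonneg S _)]; exact supNormApply_le hC hS _)

lemma tendsto_integral_supNormApply_comp {S : ℕ → ι → E →L[ℝ] F} (hC : 0 ≤ C)
    (hS : ∀ n i, ‖S n i‖ ≤ C) (hconv : ∀ y, TendstoUniformly (fun n i => S n i y) 0 atTop)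
    (hu : Integrable u μ) :
    Tendsto (fun n => ∫ a, supNormApply (S n) (u a) ∂μ) atTop (𝓝 0) := by
  have := tendsto_integral_of_dominated_convergence (fun a => C * ‖u a‖)
    (fun n => (integrable_supNormApply_comp hC (hS n) hu).1) (hu.norm.const_mul C)
    (fun n => ae_of_all _ fun a => by
      rw [Real.norm_of_nonneg (supNormApply_nonneg _ _)]; exact supNormApply_le hC (hS n) _)
    (ae_of_all _ fun a => tendsto_supNormApply_zero (hconv (u a)))
  simpa using this

end SupNormApply

lemma integrableOn_Icc_apply {F : Type*} [NormedAddCommGroup F] [NormedSpace ℝ F]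
    {Q : ℝ → E →L[ℝ] F} {a b M : ℝ} (hab : a ≤ b)
    (hQ : ∀ y, ContinuousOn (fun s => Q s y) (Icc a b)) (hM : ∀ s ∈ Icc a b, ‖Q s‖ ≤ M)
    {u : ℝ → E} (hu : IntegrableOn u (Icc a b)) :
    IntegrableOn (fun s => Q s (u s)) (Icc a b) := by
  -- extending `Q` constantly outside `[a, b]` makes it jointly continuous in `(s, y)`
  let L : ℝ → E →L[ℝ] F := fun s => Q (projIcc a b hab s)
  have hL : Continuous fun p : ℝ × E => L p.1 p.2 := by
    refine continuous_prod_of_continuous_lipschitzWith' _ M.toNNReal (fun s => ?_) (fun y => ?_)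
    · exact ContinuousLinearMap.lipschitzWith_of_opNorm_le
        ((hM _ (projIcc a b hab s).2).trans (Real.le_coe_toNNReal M))
    · exact (hQ y).comp_continuous (continuous_subtype_val.comp continuous_projIcc)
        fun s => (projIcc a b hab s).2
  have hLQ : ∀ᵐ s ∂volume.restrict (Icc a b), L s (u s) = Q s (u s) :=
    (ae_restrict_mem measurableSet_Icc).mono fun s hs => by simp [L, projIcc_of_mem hab hs]
  refine (hu.norm.const_mul M).mono'
    ((hL.comp_aestronglyMeasurable (aestronglyMeasurable_id.prodMk hu.1)).congr hLQ) ?_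
  filter_upwards [ae_restrict_mem measurableSet_Icc] with s hs
  exact (Q s).le_of_opNorm_le (hM s hs) (u s)

lemma isCompact_evolDomain (T : ℝ) : IsCompact (evolDomain T) := by
  have hclosed : IsClosed (evolDomain T) :=
    (isClosed_le continuous_const continuous_snd).inter
      ((isClosed_le continuous_snd continuous_fst).inter
        (isClosed_le continuous_fst continuous_const))
  refine (isCompact_Icc.prod isCompact_Icc : IsCompact (Icc 0 T ×ˢ Icc 0 T)).of_isClosed_subset
    hclosed ?_
  rintro ⟨t, s⟩ ⟨hs, hst, ht⟩
  exact ⟨⟨hs.trans hst, ht⟩, ⟨hs, hst.trans ht⟩⟩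

lemma IsContinuousEvolFamily.exists_norm_le [CompleteSpace E] {T : ℝ}
    {R : ℝ → ℝ → ℝ → E →L[ℝ] E} (hES : ∀ l ∈ Icc (0 : ℝ) 1, IsEvolutionSystem T (R l))
    (hcont : IsContinuousEvolFamily T R) :
    ∃ M, 0 ≤ M ∧ ∀ l ∈ Icc (0 : ℝ) 1, ∀ p ∈ evolDomain T, ‖R l p.1 p.2‖ ≤ M := by
  have : CompactSpace (evolDomain T) := isCompact_iff_compactSpace.mp (isCompact_evolDomain T)
  have hbdd : ∀ y : E, ∃ C, ∀ i : Icc (0 : ℝ) 1 × evolDomain T, ‖R i.1 i.2.1.1 i.2.1.2 y‖ ≤ C := by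
    intro y
    let Φ : Icc (0 : ℝ) 1 → C(evolDomain T, E) := fun l =>
      ⟨fun p => R l p.1.1 p.1.2 y,
        ((hES l l.2).strong_cont y).comp_continuous continuous_subtype_val Subtype.property⟩
    have hΦ : Continuous Φ := continuous_iff_seqContinuous.mpr fun {u l} hu =>
      ContinuousMap.tendsto_iff_tendstoUniformly.mpr <|
        tendstoUniformlyOn_iff_tendstoUniformly_comp_coe.mp <|
          hcont y (fun n => u n) l (fun n => (u n).2) l.2 (tendsto_subtype_rng.mp hu)
    obtain ⟨C, hC⟩ := (isCompact_range hΦ).isBounded.exists_norm_le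
    exact ⟨C, fun i => ((Φ i.1).norm_coe_le_norm i.2).trans (hC _ ⟨i.1, rfl⟩)⟩
  obtain ⟨M, hM⟩ := banach_steinhaus hbdd
  exact ⟨max M 0, le_max_right _ _,
    fun l hl p hp => (hM (⟨l, hl⟩, ⟨p, hp⟩)).trans (le_max_left _ _)⟩

lemma norm_intervalIntegral_le_setIntegral_Icc {f : ℝ → E} {g : ℝ → ℝ} {a b t : ℝ}
    (ht : t ∈ Icc a b) (hg : IntegrableOn g (Icc a b)) (hg0 : ∀ s, 0 ≤ g s)
    (hfg : ∀ s ∈ Ioc a t, ‖f s‖ ≤ g s) :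
    ‖∫ s in a..t, f s‖ ≤ ∫ s in Icc a b, g s := by
  have hsub : Ioc a t ⊆ Icc a b := fun s hs => ⟨hs.1.le, hs.2.trans ht.2⟩
  calc ‖∫ s in a..t, f s‖ ≤ ∫ s in a..t, g s :=
        intervalIntegral.norm_integral_le_of_norm_le ht.1 (ae_of_all _ hfg)
          ((intervalIntegrable_iff_integrableOn_Ioc_of_le ht.1).mpr (hg.mono_set hsub))
    _ = ∫ s in Ioc a t, g s := intervalIntegral.integral_of_le ht.1
    _ ≤ ∫ s in Icc a b, g s := setIntegral_mono_set hg (ae_of_all _ hg0) hsub.eventuallyLE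

def evolSub (T : ℝ) (R R' : ℝ → ℝ → E →L[ℝ] E) (p : evolDomain T) : E →L[ℝ] E :=
  R p.1.1 p.1.2 - R' p.1.1 p.1.2

section EvolutionSystem

variable {T M : ℝ} {R R' : ℝ → ℝ → E →L[ℝ] E}

lemma norm_evolSub_le (hRM : ∀ p ∈ evolDomain T, ‖R p.1 p.2‖ ≤ M)
    (hR'M : ∀ p ∈ evolDomain T, ‖R' p.1 p.2‖ ≤ M) (p : evolDomain T) :
    ‖evolSub T R R' p‖ ≤ 2 * M :=
  (norm_sub_le _ _).trans (by linarith [hRM p.1 p.2, hR'M p.1 p.2])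

lemma IsEvolutionSystem.intervalIntegrable_apply (hR : IsEvolutionSystem T R)
    (hRM : ∀ p ∈ evolDomain T, ‖R p.1 p.2‖ ≤ M) {u : ℝ → E} (hu : IntegrableOn u (Icc 0 T))
    {t : ℝ} (ht : t ∈ Icc 0 T) :
    IntervalIntegrable (fun s => R t s (u s)) volume 0 t := by
  have hmem : ∀ s ∈ Icc 0 t, (t, s) ∈ evolDomain T := fun s hs => ⟨hs.1, hs.2, ht.2⟩
  refine (intervalIntegrable_iff_integrableOn_Icc_of_le ht.1).mpr
    (integrableOn_Icc_apply ht.1 (fun y => ?_) (fun s hs => hRM _ (hmem s hs))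
      (hu.mono_set (Icc_subset_Icc le_rfl ht.2)))
  exact (hR.strong_cont y).comp (Continuous.prodMk_right t).continuousOn hmem

lemma norm_evolMap_sub_le (hR : IsEvolutionSystem T R) (hR' : IsEvolutionSystem T R')
    (hM : 0 ≤ M) (hRM : ∀ p ∈ evolDomain T, ‖R p.1 p.2‖ ≤ M)
    (hR'M : ∀ p ∈ evolDomain T, ‖R' p.1 p.2‖ ≤ M) (x x' : E) {w w' : ℝ → E}
    (hw : IntegrableOn w (Icc 0 T)) (hw' : IntegrableOn w' (Icc 0 T)) {t : ℝ}
    (ht : t ∈ Icc 0 T) :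
    ‖evolMap R x w t - evolMap R' x' w' t‖ ≤
      M * ‖x - x'‖ + supNormApply (evolSub T R R') x' +
        (M * ∫ s in Icc 0 T, ‖w s - w' s‖) +
          ∫ s in Icc 0 T, supNormApply (evolSub T R R') (w' s) := by
  have hS := norm_evolSub_le hRM hR'M
  have hint_w : Integrable (fun s => M * ‖w s - w' s‖) (volume.restrict (Icc 0 T)) :=
    (hw.sub hw').norm.const_mul M
  have hint_S := integrable_supNormApply_comp (by positivity) hS hw'
  have ht0 : (t, 0) ∈ evolDomain T := ⟨le_rfl, ht.1, ht.2⟩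
  have hx : ‖R t 0 x - R' t 0 x'‖ ≤ M * ‖x - x'‖ + supNormApply (evolSub T R R') x' := by
    rw [show R t 0 x - R' t 0 x' = R t 0 (x - x') + evolSub T R R' ⟨_, ht0⟩ x' by
      simp [evolSub]]
    exact norm_add_le_of_le ((R t 0).le_of_opNorm_le (hRM _ ht0) _)
      (norm_apply_le_supNormApply hS _ _)
  have hintegrals : ‖(∫ s in 0..t, R t s (w s)) - ∫ s in 0..t, R' t s (w' s)‖ ≤
      ∫ s in Icc 0 T, (M * ‖w s - w' s‖ + supNormApply (evolSub T R R') (w' s)) := by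
    rw [← intervalIntegral.integral_sub (hR.intervalIntegrable_apply hRM hw ht)
      (hR'.intervalIntegrable_apply hR'M hw' ht)]
    refine norm_intervalIntegral_le_setIntegral_Icc ht (hint_w.add hint_S)
      (fun s => add_nonneg (by positivity) (supNormApply_nonneg _ _)) fun s hs => ?_
    have hp : (t, s) ∈ evolDomain T := ⟨hs.1.le, hs.2, ht.2⟩
    rw [show R t s (w s) - R' t s (w' s) = R t s (w s - w' s) + evolSub T R R' ⟨_, hp⟩ (w' s) by
      simp [evolSub]]
    exact norm_add_le_of_le ((R t s).le_of_opNorm_le (hRM _ hp) _)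
      (norm_apply_le_supNormApply hS _ _)
  rw [integral_add hint_w hint_S, integral_const_mul] at hintegrals
  calc ‖evolMap R x w t - evolMap R' x' w' t‖ =
        ‖(R t 0 x - R' t 0 x') + ((∫ s in 0..t, R t s (w s)) - ∫ s in 0..t, R' t s (w' s))‖ := by
        rw [evolMap, evolMap]; abel_nf
    _ ≤ _ := by linarith [norm_add_le_of_le hx hintegrals]

end EvolutionSystem

lemma IsContinuousEvolFamily.tendstoUniformly_evolSub {T : ℝ} {R : ℝ → ℝ → ℝ → E →L[ℝ] E}
    (hcont : IsContinuousEvolFamily T R) {lam : ℕ → ℝ} {lam0 : ℝ}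
    (hlam : ∀ n, lam n ∈ Icc (0 : ℝ) 1) (hlam0 : lam0 ∈ Icc (0 : ℝ) 1)
    (hlamlim : Tendsto lam atTop (𝓝 lam0)) (y : E) :
    TendstoUniformly (fun n p => evolSub T (R (lam n)) (R lam0) p y) 0 atTop := by
  refine Metric.tendstoUniformly_iff.mpr fun ε hε => ?_
  filter_upwards [Metric.tendstoUniformlyOn_iff.mp (hcont y lam lam0 hlam hlam0 hlamlim) ε hε]
    with n hn p
  simpa [evolSub, dist_eq_norm, norm_sub_rev] using hn p.1 p.2

theorem statement_3_general
    {E : Type*} [NormedAddCommGroup E] [NormedSpace ℝ E] [CompleteSpace E]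
    (T : ℝ)
    (R : ℝ → ℝ → ℝ → E →L[ℝ] E)
    (hES : ∀ lam ∈ Icc (0 : ℝ) 1, IsEvolutionSystem T (R lam))
    (hcont : IsContinuousEvolFamily T R)
    (x : ℕ → E) (x0 : E) (hx : Tendsto x atTop (𝓝 x0))
    (w : ℕ → ℝ → E) (w0 : ℝ → E)
    (hwint : ∀ n, IntegrableOn (w n) (Icc (0 : ℝ) T))
    (hw0int : IntegrableOn w0 (Icc (0 : ℝ) T))
    (hw : Tendsto (fun n => ∫ t in Icc (0 : ℝ) T, ‖w n t - w0 t‖) atTop (𝓝 0))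
    (lam : ℕ → ℝ) (lam0 : ℝ)
    (hlam : ∀ n, lam n ∈ Icc (0 : ℝ) 1) (hlam0 : lam0 ∈ Icc (0 : ℝ) 1)
    (hlamlim : Tendsto lam atTop (𝓝 lam0)) :
    TendstoUniformlyOn (fun n t => evolMap (R (lam n)) (x n) (w n) t)
      (evolMap (R lam0) x0 w0) atTop (Icc (0 : ℝ) T) := by
  obtain ⟨M, hM0, hM⟩ := hcont.exists_norm_le hES
  let S n := evolSub T (R (lam n)) (R lam0)
  have hS n : ∀ p, ‖S n p‖ ≤ 2 * M := norm_evolSub_le (hM _ (hlam n)) (hM _ hlam0)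
  have hSconv := hcont.tendstoUniformly_evolSub hlam hlam0 hlamlim
  have hbound_lim : Tendsto (fun n => M * ‖x n - x0‖ + supNormApply (S n) x0 +
      (M * ∫ s in Icc 0 T, ‖w n s - w0 s‖) + ∫ s in Icc 0 T, supNormApply (S n) (w0 s))
      atTop (𝓝 0) := by
    simpa using ((((tendsto_iff_norm_sub_tendsto_zero.mp hx).const_mul M).add
      (tendsto_supNormApply_zero (hSconv x0))).add (hw.const_mul M)).add
        (tendsto_integral_supNormApply_comp (by positivity) hS hSconv hw0int)
  refine tendstoUniformlyOn_of_dist_le (fun n t ht => ?_) hbound_lim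
  rw [dist_comm, dist_eq_norm]
  exact norm_evolMap_sub_le (hES _ (hlam n)) (hES _ hlam0) hM0 (hM _ (hlam n))
    (hM _ hlam0) (x n) x0 (hwint n) hw0int ht

/-- Proposition 1(i): the operator
`Σ(x,w,λ)(t) = R^{(λ)}(t,0)x + ∫₀ᵗ R^{(λ)}(t,s)w(s)ds` is continuous from
`E × L¹([0,T],E) × [0,1]` to `C([0,T],E)`, expressed sequentially: if `xₙ → x₀` in `E`,
`wₙ → w₀` in `L¹([0,T],E)` and `λₙ → λ₀` in `[0,1]`, then `Σ(xₙ,wₙ,λₙ) → Σ(x₀,w₀,λ₀)`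
uniformly on `[0,T]`. -/
theorem statement_3
    {E : Type*} [NormedAddCommGroup E] [NormedSpace ℝ E] [CompleteSpace E]
    (T : ℝ) (hT : 0 < T)
    (R : ℝ → ℝ → ℝ → E →L[ℝ] E)
    (hES : ∀ lam ∈ Icc (0 : ℝ) 1, IsEvolutionSystem T (R lam))
    (hcont : IsContinuousEvolFamily T R)
    (x : ℕ → E) (x0 : E) (hx : Tendsto x atTop (𝓝 x0))
    (w : ℕ → ℝ → E) (w0 : ℝ → E)
    (hwint : ∀ n, IntegrableOn (w n) (Icc (0 : ℝ) T))
    (hw0int : IntegrableOn w0 (Icc (0 : ℝ) T))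
    (hw : Tendsto (fun n => ∫ t in Icc (0 : ℝ) T, ‖w n t - w0 t‖) atTop (𝓝 0))
    (lam : ℕ → ℝ) (lam0 : ℝ)
    (hlam : ∀ n, lam n ∈ Icc (0 : ℝ) 1) (hlam0 : lam0 ∈ Icc (0 : ℝ) 1)
    (hlamlim : Tendsto lam atTop (𝓝 lam0)) :
    TendstoUniformlyOn (fun n t => evolMap (R (lam n)) (x n) (w n) t)
      (evolMap (R lam0) x0 w0) atTop (Icc (0 : ℝ) T) :=
  statement_3_general T R hES hcont x x0 hx w w0 hwint hw0int hw lam lam0 hlam hlam0 hlamlim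
end
end

section
/- Let T>0, E a Banach space, and {R^{(λ)}}_{λ∈[0,1]} a continuous family of evolution systems on E such that ‖R^{(λ)}(t,s)‖ ≤ M e^{ω(t−s)} for all 0≤s≤t≤T and λ∈[0,1], where M>0 and ω∈ℝ are constants. Then for every bounded set Q⊂E and all s,t∈[0,T] with s≤t, β({R^{(λ)}(t,s)x : x∈Q, λ∈[0,1]}) ≤ M e^{ω(t−s)} β(Q). -/
open Filter Topology Set MeasureTheory

noncomputable section

variable {E : Type*} [NormedAddCommGroup E] [NormedSpace ℝ E]

/-!
Cover `Q` by finitely many balls `B(y, r)` with `r` close to `β(Q)`. Each `R^{(λ)}(t,s)` maps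
`B(y, r)` into `B(R^{(λ)}(t,s) y, K r)` with `K = M e^{ω(t-s)}`, and for each of the finitely many
centres `y` the curve `λ ↦ R^{(λ)}(t,s) y` is continuous on `[0,1]`, hence has compact range
coverable by finitely many `ε`-balls. So the whole image is covered by finitely many
`(K r + ε)`-balls.
-/

theorem hausdorffMNC_nonneg {V : Type*} [NormedAddCommGroup V] (Q : Set V) : 0 ≤ hausdorffMNC Q :=
  Real.sInf_nonneg fun _ hr => hr.1.le

theorem hausdorffMNC_le_of_subset_iUnion_ball {V : Type*} [NormedAddCommGroup V]
    {Q : Set V} {r : ℝ} (hr : 0 < r) (c : Finset V)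
    (hc : Q ⊆ ⋃ y ∈ c, Metric.ball y r) : hausdorffMNC Q ≤ r :=
  csInf_le ⟨0, fun _ hρ => hρ.1.le⟩ ⟨hr, c, hc⟩

theorem Bornology.IsBounded.exists_finset_cover_lt_hausdorffMNC_add
    {V : Type*} [NormedAddCommGroup V] {Q : Set V}
    (hQ : Bornology.IsBounded Q) {δ : ℝ} (hδ : 0 < δ) :
    ∃ r, 0 < r ∧ r < hausdorffMNC Q + δ ∧ ∃ c : Finset V, Q ⊆ ⋃ y ∈ c, Metric.ball y r := by
  obtain ⟨ρ, hρ, hQρ⟩ := hQ.subset_ball_lt 0 0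
  have hne : {r : ℝ | 0 < r ∧ ∃ c : Finset V, Q ⊆ ⋃ y ∈ c, Metric.ball y r}.Nonempty :=
    ⟨ρ, hρ, {0}, by simpa using hQρ⟩
  obtain ⟨r, ⟨hr, c, hc⟩, hrδ⟩ := Real.lt_sInf_add_pos hne hδ
  exact ⟨r, hr, hrδ, c, hc⟩

theorem TotallyBounded.exists_finset_cover_ball {F : Type*} [PseudoMetricSpace F] {S : Set F}
    (hS : TotallyBounded S) {ε : ℝ} (hε : 0 < ε) :
    ∃ d : Finset F, S ⊆ ⋃ z ∈ d, Metric.ball z ε := by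
  obtain ⟨d, hd, hSd⟩ := Metric.totallyBounded_iff.mp hS ε hε
  exact ⟨hd.toFinset, by simpa using hSd⟩

theorem hausdorffMNC_le_of_lipschitz_of_totallyBounded_orbits
    {V W : Type*} [NormedAddCommGroup V] [NormedAddCommGroup W] {ι : Type*} {I : Set ι}
    {f : ι → V → W} {K : ℝ} (hK : 0 ≤ K)
    (hf : ∀ i ∈ I, ∀ x y, dist (f i x) (f i y) ≤ K * dist x y)
    (horbit : ∀ x, TotallyBounded ((fun i => f i x) '' I))
    {Q : Set V} (hQ : Bornology.IsBounded Q) :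
    hausdorffMNC {y : W | ∃ x ∈ Q, ∃ i ∈ I, y = f i x} ≤ K * hausdorffMNC Q := by
  classical
  refine le_of_forall_pos_le_add fun ε hε => ?_
  obtain ⟨r, hr, hrβ, c, hc⟩ :=
    hQ.exists_finset_cover_lt_hausdorffMNC_add (show 0 < ε / (2 * (K + 1)) by positivity)
  choose d hd using fun x => (horbit x).exists_finset_cover_ball (half_pos hε)
  have hKr : K * r + ε / 2 ≤ K * hausdorffMNC Q + ε := by
    have : K * (ε / (2 * (K + 1))) ≤ ε / 2 := by
      rw [mul_div_assoc', div_le_div_iff₀ (by positivity) two_pos]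
      nlinarith
    nlinarith [mul_le_mul_of_nonneg_left hrβ.le hK]
  refine hausdorffMNC_le_of_subset_iUnion_ball
    (add_pos_of_nonneg_of_pos (mul_nonneg hK (hausdorffMNC_nonneg Q)) hε) (c.biUnion d) ?_
  rintro _ ⟨x, hxQ, i, hi, rfl⟩
  obtain ⟨y, hyc, hxy⟩ : ∃ y ∈ c, dist x y < r := by simpa using hc hxQ
  obtain ⟨z, hzd, hyz⟩ : ∃ z ∈ d y, dist (f i y) z < ε / 2 := by
    simpa using hd y (mem_image_of_mem _ hi)
  simp only [mem_iUnion, Finset.mem_biUnion, Metric.mem_ball]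
  refine ⟨z, ⟨y, hyc, hzd⟩, lt_of_lt_of_le ?_ hKr⟩
  calc dist (f i x) z ≤ dist (f i x) (f i y) + dist (f i y) z := dist_triangle _ _ _
    _ ≤ K * dist x y + dist (f i y) z := add_le_add_left (hf i hi x y) _
    _ < K * r + ε / 2 := add_lt_add_of_le_of_lt (mul_le_mul_of_nonneg_left hxy.le hK) hyz

theorem IsContinuousEvolFamily.continuousOn_apply {T : ℝ} {R : ℝ → ℝ → ℝ → E →L[ℝ] E}
    (hR : IsContinuousEvolFamily T R) {t s : ℝ} (hts : (t, s) ∈ evolDomain T) (x : E) :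
    ContinuousOn (fun lam => R lam t s x) (Icc 0 1) := by
  rw [continuousOn_iff_continuous_domRestrict, continuous_iff_seqContinuous]
  intro u lam hu
  exact (hR x (fun n => u n) lam (fun n => (u n).2) lam.2
    ((continuous_subtype_val.tendsto lam).comp hu)).tendsto_at hts

theorem statement_5_general
    {E : Type*} [NormedAddCommGroup E] [NormedSpace ℝ E]
    (T : ℝ)
    (R : ℝ → ℝ → ℝ → E →L[ℝ] E)
    (hcont : IsContinuousEvolFamily T R)
    (M ω : ℝ)
    (hbound : ∀ lam ∈ Icc (0 : ℝ) 1, ∀ s t : ℝ, 0 ≤ s → s ≤ t → t ≤ T →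
      ‖R lam t s‖ ≤ M * Real.exp (ω * (t - s)))
    (Q : Set E) (hQ : Bornology.IsBounded Q)
    (s t : ℝ) (hs : 0 ≤ s) (hst : s ≤ t) (htT : t ≤ T) :
    hausdorffMNC {y : E | ∃ x ∈ Q, ∃ lam ∈ Icc (0 : ℝ) 1, y = R lam t s x} ≤
      M * Real.exp (ω * (t - s)) * hausdorffMNC Q := by
  have hbound_ts := fun lam hlam => hbound lam hlam s t hs hst htT
  refine hausdorffMNC_le_of_lipschitz_of_totallyBounded_orbits
    ((norm_nonneg _).trans (hbound_ts 0 (left_mem_Icc.mpr zero_le_one)))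
    (fun lam hlam x y => ((R lam t s).dist_le_opNorm x y).trans ?_) (fun x => ?_) hQ
  · exact mul_le_mul_of_nonneg_right (hbound_ts lam hlam) dist_nonneg
  · exact (isCompact_Icc.image_of_continuousOn
      (hcont.continuousOn_apply ⟨hs, hst, htT⟩ x)).totallyBounded

/-- Lemma 4: if `‖R^{(λ)}(t,s)‖ ≤ M e^{ω(t−s)}` for a continuous family of
evolution systems, then for every bounded `Q ⊆ E` and `0 ≤ s ≤ t ≤ T`,
`β({R^{(λ)}(t,s)x : x ∈ Q, λ ∈ [0,1]}) ≤ M e^{ω(t−s)} β(Q)`. -/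
theorem statement_5
    {E : Type*} [NormedAddCommGroup E] [NormedSpace ℝ E] [CompleteSpace E]
    (T : ℝ) (hT : 0 < T)
    (R : ℝ → ℝ → ℝ → E →L[ℝ] E)
    (hES : ∀ lam ∈ Icc (0 : ℝ) 1, IsEvolutionSystem T (R lam))
    (hcont : IsContinuousEvolFamily T R)
    (M ω : ℝ) (hM : 0 < M)
    (hbound : ∀ lam ∈ Icc (0 : ℝ) 1, ∀ s t : ℝ, 0 ≤ s → s ≤ t → t ≤ T →
      ‖R lam t s‖ ≤ M * Real.exp (ω * (t - s)))
    (Q : Set E) (hQ : Bornology.IsBounded Q)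
    (s t : ℝ) (hs : 0 ≤ s) (hst : s ≤ t) (htT : t ≤ T) :
    hausdorffMNC {y : E | ∃ x ∈ Q, ∃ lam ∈ Icc (0 : ℝ) 1, y = R lam t s x} ≤
      M * Real.exp (ω * (t - s)) * hausdorffMNC Q :=
  statement_5_general T R hcont M ω hbound Q hQ s t hs hst htT
end
end
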